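/- arXiv:1201.4832 — 10 statements merged into one kernel-verified Lean document; each statement's English description precedes it below -/
import Mathlib

section
/- For every topological space X, the following are equivalent: (1) for every sequence (O_n)_{n∈ℕ} of pairwise disjoint nonempty open subsets of X, there exist an infinite set J ⊆ ℕ and a point x ∈ X such that every neighborhood of x intersects all but finitely many of the sets O_n with n ∈ J; (2) the same condition without requiring the sets O_n to be pairwise disjoint. -/
/-!
Given nonempty open sets `O n`, either infinitely many of them contain pairwise disjoint nonempty
open sets `W k ⊆ O (f k)`, and the disjoint version applied to the `W k` settles the matter, or
some point lies in the closure of infinitely many `O n`, and then every neighbourhood of it meets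
all of those. When there is no such disjoint refinement, every open `G` meeting infinitely many
`O n` has a subset `G ∩ O m`, with `m` arbitrarily large, that again meets infinitely many, for
otherwise a greedy choice among the `G ∩ O n` is a disjoint refinement. Iterating gives a decreasing sequence of nonempty open sets `H t ⊆ O (m t)`; some
`H T` lies in the closure of every `H t`, since otherwise the differences `H t \ closure (H t')`
form a disjoint refinement, and any point of `H T` will do.
-/

def SeqPseudocompact (X : Type*) [TopologicalSpace X] : Prop :=
  ∀ O : ℕ → Set X, (∀ n, IsOpen (O n)) → (∀ n, (O n).Nonempty) →
    ∃ J : Set ℕ, J.Infinite ∧ ∃ x : X,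
      ∀ U ∈ nhds x, {n ∈ J | U ∩ O n = ∅}.Finite

def DSeqPseudocompact (X : Type*) [TopologicalSpace X] : Prop :=
  ∀ O : ℕ → Set X, (∀ n, IsOpen (O n)) → (∀ n, (O n).Nonempty) →
    Pairwise (Function.onFun Disjoint O) →
    ∃ J : Set ℕ, J.Infinite ∧ ∃ x : X,
      ∀ U ∈ nhds x, {n ∈ J | U ∩ O n = ∅}.Finite

open Set Function Topology

def HasDisjointOpenRefinement {X : Type*} [TopologicalSpace X] (O : ℕ → Set X) : Prop :=
  ∃ (W : ℕ → Set X) (f : ℕ → ℕ), Injective f ∧ (∀ k, IsOpen (W k)) ∧ (∀ k, (W k).Nonempty) ∧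
    (∀ k, W k ⊆ O (f k)) ∧ Pairwise (Disjoint on W)

lemma exists_strictMono_pairwise_disjoint {α : Type*} {V : ℕ → Set α} {S : Set ℕ}
    (hS : S.Infinite) (hV : ∀ m ∈ S, {n | (V m ∩ V n).Nonempty}.Finite) :
    ∃ f : ℕ → ℕ, StrictMono f ∧ (∀ k, f k ∈ S) ∧ Pairwise (Disjoint on (V ∘ f)) := by
  obtain ⟨f, hfS, hf⟩ := exists_seq_of_forall_finset_exists (· ∈ S)
    (fun a b => a < b ∧ Disjoint (V a) (V b)) fun s hs => by
      have hbad : (Iic (s.sup id) ∪ ⋃ m ∈ s, {n | (V m ∩ V n).Nonempty}).Finite :=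
        (finite_Iic _).union (s.finite_toSet.biUnion fun m hm => hV m (hs m hm))
      obtain ⟨y, hyS, hy⟩ := (hS.sdiff hbad).nonempty
      simp only [mem_union, mem_Iic, mem_iUnion, mem_ofPred_eq, not_or, not_exists,
        not_nonempty_iff_eq_empty, not_le] at hy
      exact ⟨y, hyS, fun a ha => ⟨(Finset.le_sup (f := id) ha).trans_lt hy.1,
        disjoint_iff_inter_eq_empty.2 (hy.2 a ha)⟩⟩
  exact ⟨f, fun a b h => (hf a b h).1, hfS,
    (pairwise_disjoint_on _).2 fun a b h => (hf a b h).2⟩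

section

variable {X : Type*} [TopologicalSpace X]

lemma HasDisjointOpenRefinement.of_subset {O P : ℕ → Set X} {m : ℕ → ℕ} (hm : Injective m)
    (hPO : ∀ t, P t ⊆ O (m t)) (hP : HasDisjointOpenRefinement P) :
    HasDisjointOpenRefinement O := by
  obtain ⟨W, f, hf, hWo, hWne, hWP, hWd⟩ := hP
  exact ⟨W, m ∘ f, hm.comp hf, hWo, hWne, fun k => (hWP k).trans (hPO _), hWd⟩

lemma DSeqPseudocompact.exists_of_hasDisjointOpenRefinement (hX : DSeqPseudocompact X)
    {O : ℕ → Set X} (hO : HasDisjointOpenRefinement O) :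
    ∃ J : Set ℕ, J.Infinite ∧ ∃ x : X, ∀ U ∈ 𝓝 x, {n ∈ J | U ∩ O n = ∅}.Finite := by
  obtain ⟨W, f, hf, hWo, hWne, hWO, hWd⟩ := hO
  obtain ⟨J, hJ, x, hx⟩ := hX W hWo hWne hWd
  refine ⟨f '' J, hJ.image hf.injOn, x, fun U hU => ((hx U hU).image f).subset ?_⟩
  rintro _ ⟨⟨k, hk, rfl⟩, hUO⟩
  exact ⟨k, ⟨hk, subset_empty_iff.1 (hUO ▸ inter_subset_inter_right U (hWO k))⟩, rfl⟩

lemma exists_gt_infinite_inter_nonempty {O : ℕ → Set X} (hO : ∀ n, IsOpen (O n))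
    (hOr : ¬ HasDisjointOpenRefinement O) {G : Set X} (hG : IsOpen G)
    (hGO : {n | (G ∩ O n).Nonempty}.Infinite) (N : ℕ) :
    ∃ m, N < m ∧ {n | (G ∩ O m ∩ O n).Nonempty}.Infinite := by
  by_contra! h
  obtain ⟨f, hf, hfS, hfd⟩ := exists_strictMono_pairwise_disjoint (V := fun n => G ∩ O n)
    (hGO.sdiff (finite_Iic N)) fun m hm => (h m (not_le.1 hm.2)).subset fun n hn =>
      hn.mono (inter_subset_inter_right _ inter_subset_right)
  exact hOr ⟨fun k => G ∩ O (f k), f, hf.injective, fun k => hG.inter (hO _),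
    fun k => (hfS k).1, fun k => inter_subset_right, hfd⟩

lemma exists_antitone_open_subset {O : ℕ → Set X} (hO : ∀ n, IsOpen (O n))
    (hne : ∀ n, (O n).Nonempty) (hOr : ¬ HasDisjointOpenRefinement O) :
    ∃ (H : ℕ → Set X) (m : ℕ → ℕ), StrictMono m ∧ Antitone H ∧ (∀ t, IsOpen (H t)) ∧
      (∀ t, (H t).Nonempty) ∧ ∀ t, H t ⊆ O (m t) := by
  let State := {p : Set X × ℕ // IsOpen p.1 ∧ {n | (p.1 ∩ O n).Nonempty}.Infinite}
  have step : ∀ p : State, ∃ q : State, q.1.1 ⊆ p.1.1 ∩ O q.1.2 ∧ p.1.2 < q.1.2 := by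
    rintro ⟨⟨G, N⟩, hG, hGO⟩
    obtain ⟨m, hNm, hm⟩ := exists_gt_infinite_inter_nonempty hO hOr hG hGO N
    exact ⟨⟨(G ∩ O m, m), hG.inter (hO m), hm⟩, subset_rfl, hNm⟩
  choose next hnext using step
  let init : State := ⟨(univ, 0), isOpen_univ, by simpa [hne] using infinite_univ (α := ℕ)⟩
  let p : ℕ → State := fun k => next^[k] init
  have hp : ∀ k, p (k + 1) = next (p k) := fun k => iterate_succ_apply' next k init
  refine ⟨fun t => (p (t + 1)).1.1, fun t => (p (t + 1)).1.2,
    strictMono_nat_of_lt_succ fun t => ?_, antitone_nat_of_succ_le fun t => ?_,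
    fun t => (p (t + 1)).2.1, fun t => ?_, fun t => ?_⟩
  · simpa only [hp (t + 1)] using (hnext (p (t + 1))).2
  · simpa only [hp (t + 1)] using (hnext (p (t + 1))).1.trans inter_subset_left
  · obtain ⟨n, hn⟩ := (p (t + 1)).2.2.nonempty
    exact hn.mono inter_subset_left
  · simpa only [hp t] using (hnext (p t)).1.trans inter_subset_right

lemma hasDisjointOpenRefinement_of_antitone {H : ℕ → Set X} (hH : Antitone H)
    (hHo : ∀ t, IsOpen (H t)) (hcl : ∀ T, ∃ t, ¬ H T ⊆ closure (H t)) :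
    HasDisjointOpenRefinement H := by
  have hgap : ∀ T, ∃ t, T < t ∧ (H T \ closure (H t)).Nonempty := by
    intro T
    obtain ⟨t, ht⟩ := hcl T
    exact ⟨t, lt_of_not_ge fun htT => ht ((hH htT).trans subset_closure), not_subset.1 ht⟩
  choose w hw hwne using hgap
  obtain ⟨f, -, hf⟩ := exists_seq_of_forall_finset_exists (fun _ => True) (fun a b => w a ≤ b)
    fun s _ => ⟨s.sup w, trivial, fun a ha => Finset.le_sup ha⟩
  have hfmono : StrictMono f := fun a b hab => (hw (f a)).trans_le (hf a b hab)
  refine ⟨fun k => H (f k) \ closure (H (w (f k))), f, hfmono.injective,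
    fun k => (hHo _).sdiff isClosed_closure, fun k => hwne _, fun k => sdiff_subset,
    (pairwise_disjoint_on _).2 fun a b hab => ?_⟩
  exact disjoint_left.2 fun x hxa hxb => hxa.2 (subset_closure (hH (hf a b hab) hxb.1))

lemma exists_infinite_mem_closure {O : ℕ → Set X} (hO : ∀ n, IsOpen (O n))
    (hne : ∀ n, (O n).Nonempty) (hOr : ¬ HasDisjointOpenRefinement O) :
    ∃ x, {n | x ∈ closure (O n)}.Infinite := by
  obtain ⟨H, m, hm, hH, hHo, hHne, hHO⟩ := exists_antitone_open_subset hO hne hOr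
  obtain ⟨T, hT⟩ : ∃ T, ∀ t, H T ⊆ closure (H t) := by
    by_contra! h
    exact hOr ((hasDisjointOpenRefinement_of_antitone hH hHo h).of_subset hm.injective hHO)
  obtain ⟨x, hx⟩ := hHne T
  refine ⟨x, (infinite_range_of_injective hm.injective).mono ?_⟩
  rintro _ ⟨t, rfl⟩
  exact closure_mono (hHO t) (hT t hx)

end

theorem seq_pseudocompact_iff_disjoint_version (X : Type*) [TopologicalSpace X] :
    DSeqPseudocompact X ↔ SeqPseudocompact X := by
  refine ⟨fun hX O hO hne => ?_, fun hX O hO hne _ => hX O hO hne⟩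
  by_cases hOr : HasDisjointOpenRefinement O
  · exact hX.exists_of_hasDisjointOpenRefinement hOr
  obtain ⟨x, hx⟩ := exists_infinite_mem_closure hO hne hOr
  refine ⟨_, hx, x, fun U hU => finite_empty.subset ?_⟩
  rintro n ⟨hxn, hUn⟩
  exact (mem_closure_iff_nhds.1 hxn U hU).ne_empty hUn
end

section
/- If every factor of a product of topological spaces is sequentially pseudocompact, then the product (with the Tychonoff product topology) is sequentially pseudocompact. -/
lemma seqPC_step {Y : Type*} [TopologicalSpace Y] (hY : SeqPseudocompact Y)
    (W : ℕ → Set Y) (hW : ∀ n, IsOpen (W n)) (hWne : ∀ n, (W n).Nonempty)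
    (J : Set ℕ) (hJ : J.Infinite) :
    ∃ J' : Set ℕ, J' ⊆ J ∧ J'.Infinite ∧ ∃ x : Y,
      ∀ U ∈ nhds x, {n ∈ J' | U ∩ W n = ∅}.Finite := by
  obtain ⟨K, hKinf, x, hx⟩ :=
    hY (fun m => W (Nat.nth (· ∈ J) m)) (fun m => hW _) (fun m => hWne _)
  refine ⟨Nat.nth (· ∈ J) '' K, ?_, ?_, x, ?_⟩
  · rintro - ⟨m, -, rfl⟩; exact Nat.nth_mem_of_infinite hJ m
  · exact hKinf.image ((Nat.nth_injective hJ).injOn)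
  · intro U hU
    have hsub : {n ∈ Nat.nth (· ∈ J) '' K | U ∩ W n = ∅} ⊆
        Nat.nth (· ∈ J) '' {m ∈ K | U ∩ W (Nat.nth (· ∈ J) m) = ∅} := by
      rintro n ⟨⟨m, hm, rfl⟩, hn⟩; exact ⟨m, ⟨hm, hn⟩, rfl⟩
    exact (((hx U hU).image _).subset hsub)

lemma seqPC_cast {α : Sort*} (T : α → Type*) [∀ a, TopologicalSpace (T a)]
    {a b : α} (h : a = b) (y : T a) (P : ∀ c, Set (T c) → Prop)
    (hy : ∀ V ∈ nhds y, P a V) : ∀ V ∈ nhds (h ▸ y), P b V := by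
  subst h; exact hy

theorem seqPseudocompact_pi {H : Type*} (X : H → Type*) [∀ h, TopologicalSpace (X h)]
    (hX : ∀ h, SeqPseudocompact (X h)) : SeqPseudocompact (∀ h, X h) := by
  classical
  intro O hopen hne
  -- pick a point in each O n
  choose p hp using hne
  haveI hXne : ∀ h, Nonempty (X h) := fun h => ⟨p 0 h⟩
  by_cases hH : Nonempty H
  case neg =>
    -- trivial case: empty index, product is a singleton
    refine ⟨Set.univ, Set.infinite_univ, p 0, fun U hU => ?_⟩
    have : {n ∈ Set.univ | U ∩ O n = ∅} = ∅ := by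
      ext n
      simp only [Set.mem_setOf_eq, Set.mem_empty_iff_false, iff_false, not_and]
      intro _
      have hx : p 0 = p n := funext fun h => absurd ⟨h⟩ hH
      intro hEq
      have : p 0 ∈ U ∩ O n := ⟨mem_of_mem_nhds hU, hx ▸ hp n⟩
      simp [hEq] at this
    rw [this]; exact Set.finite_empty
  obtain ⟨h₀⟩ := hH
  -- basic open boxes inside each O n
  have hbasic : ∀ n, ∃ (I : Finset H) (u : ∀ h, Set (X h)),
      (∀ h, h ∈ I → IsOpen (u h) ∧ p n h ∈ u h) ∧ (I : Set H).pi u ⊆ O n :=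
    fun n => isOpen_pi_iff.mp (hopen n) (p n) (hp n)
  choose I u hu hIu using hbasic
  -- full boxes
  set u' : ℕ → ∀ h, Set (X h) := fun n h => if h ∈ I n then u n h else Set.univ with hu'def
  have hu'open : ∀ n h, IsOpen (u' n h) := by
    intro n h
    by_cases hh : h ∈ I n
    · simpa [hu'def, hh] using (hu n h hh).1
    · simp [hu'def, hh]
  have hu'ne : ∀ n h, (u' n h).Nonempty := by
    intro n h
    by_cases hh : h ∈ I n
    · exact ⟨p n h, by simpa [hu'def, hh] using (hu n h hh).2⟩
    · simp [hu'def, hh]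
  have hu'O : ∀ n, Set.pi Set.univ (u' n) ⊆ O n := by
    intro n z hz
    refine hIu n fun h hh => ?_
    have hh2 : h ∈ I n := hh
    have := hz h (Set.mem_univ h)
    simpa [hu'def, hh2] using this
  -- countable set of relevant coordinates, enumerated by e
  have hScount : (insert h₀ (⋃ n, ((I n : Finset H) : Set H))).Countable :=
    (Set.countable_iUnion fun n => (I n).countable_toSet).insert h₀
  obtain ⟨e, he⟩ := hScount.exists_eq_range ⟨h₀, Set.mem_insert _ _⟩
  have hecov : ∀ {n : ℕ} {h : H}, h ∈ I n → ∃ k, e k = h := by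
    intro n h hh
    have : h ∈ insert h₀ (⋃ n, ((I n : Finset H) : Set H)) :=
      Set.mem_insert_of_mem _ (Set.mem_iUnion.mpr ⟨n, hh⟩)
    rw [he] at this
    obtain ⟨k, hk⟩ := this
    exact ⟨k, hk⟩
  -- the refining step for each coordinate
  have key : ∀ k (J : Set ℕ), J.Infinite → ∃ J' : Set ℕ, J' ⊆ J ∧ J'.Infinite ∧
      ∃ x : X (e k), ∀ U ∈ nhds x, {n ∈ J' | U ∩ u' n (e k) = ∅}.Finite :=
    fun k J hJ => seqPC_step (hX (e k)) (fun n => u' n (e k))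
      (fun n => hu'open n (e k)) (fun n => hu'ne n (e k)) J hJ
  choose F hFsub hFinf xF hxF using key
  -- the decreasing chain of infinite sets
  let c : ℕ → {J : Set ℕ // J.Infinite} := fun k =>
    Nat.rec ⟨Set.univ, Set.infinite_univ⟩
      (fun k ih => ⟨F k ih.1 ih.2, hFinf k ih.1 ih.2⟩) k
  have hcsucc : ∀ k, (c (k + 1)).1 = F k (c k).1 (c k).2 := fun k => rfl
  have hmono : ∀ k, (c (k + 1)).1 ⊆ (c k).1 := fun k => hFsub k (c k).1 (c k).2
  have hchain : ∀ k l, k ≤ l → (c l).1 ⊆ (c k).1 := by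
    intro k l hkl
    induction l with
    | zero => simp_all
    | succ l ih =>
      rcases Nat.lt_or_ge k (l + 1) with hlt | hge
      · exact (ih (Nat.lt_succ_iff.mp hlt)).trans' (hmono l)
      · have : k = l + 1 := le_antisymm hkl hge
        subst this; exact fun _ h => h
  -- chosen points
  set y : ∀ k, X (e k) := fun k => xF k (c k).1 (c k).2 with hydef
  have hy : ∀ k, ∀ U ∈ nhds (y k), {n ∈ (c (k + 1)).1 | U ∩ u' n (e k) = ∅}.Finite := by
    intro k
    rw [hcsucc k]
    exact hxF k (c k).1 (c k).2
  -- diagonal sequence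
  have hgt : ∀ k (m : ℕ), ∃ l ∈ (c (k + 1)).1, m < l := fun k m => (c (k + 1)).2.exists_gt m
  choose g hg1 hg2 using hgt
  let d : ℕ → ℕ := fun k => Nat.rec (g 0 0) (fun k ih => g (k + 1) ih) k
  have hdmem : ∀ k, d k ∈ (c (k + 1)).1 := by
    intro k; cases k with
    | zero => exact hg1 0 0
    | succ k => exact hg1 (k + 1) (d k)
  have hdmono : StrictMono d := strictMono_nat_of_lt_succ fun k => hg2 (k + 1) (d k)
  have hJinf : (Set.range d).Infinite := Set.infinite_range_of_injective hdmono.injective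
  have hJdiff : ∀ k, (Set.range d \ (c (k + 1)).1) ⊆ d '' Set.Iio k := by
    rintro k - ⟨⟨j, rfl⟩, hnot⟩
    refine ⟨j, ?_, rfl⟩
    by_contra hjk
    simp only [Set.mem_Iio, not_lt] at hjk
    exact hnot (hchain (k + 1) (j + 1) (by omega) (hdmem j))
  -- the limit point
  have hpick : ∀ h : H, ∃ k : ℕ, (∃ k', e k' = h) → e k = h := by
    intro h
    by_cases hh : ∃ k', e k' = h
    · exact ⟨hh.choose, fun _ => hh.choose_spec⟩
    · exact ⟨0, fun hc => absurd hc hh⟩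
  choose r hr using hpick
  refine ⟨Set.range d, hJinf,
    fun h => if hh : ∃ k', e k' = h then hr h hh ▸ y (r h) else Classical.arbitrary _, ?_⟩
  set x : ∀ h, X h :=
    fun h => if hh : ∃ k', e k' = h then hr h hh ▸ y (r h) else Classical.arbitrary _ with hxdef
  -- coordinatewise convergence
  have main : ∀ h : H, ∀ V ∈ nhds (x h), {n ∈ Set.range d | V ∩ u' n h = ∅}.Finite := by
    intro h
    by_cases hh : ∃ k', e k' = h
    · have hxh : x h = hr h hh ▸ y (r h) := by rw [hxdef]; exact dif_pos hh
      rw [hxh]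
      have base : ∀ V ∈ nhds (y (r h)),
          {n ∈ Set.range d | V ∩ u' n (e (r h)) = ∅}.Finite := by
        intro V hV
        have h1 := hy (r h) V hV
        have : {n ∈ Set.range d | V ∩ u' n (e (r h)) = ∅} ⊆
            (Set.range d \ (c (r h + 1)).1) ∪ {n ∈ (c (r h + 1)).1 | V ∩ u' n (e (r h)) = ∅} := by
          rintro n ⟨hn1, hn2⟩
          by_cases hm : n ∈ (c (r h + 1)).1
          · exact Or.inr ⟨hm, hn2⟩
          · exact Or.inl ⟨hn1, hm⟩
        exact ((((Set.Iio (r h)).toFinite.image d).subset (hJdiff (r h))).union h1).subset this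
      exact seqPC_cast X (hr h hh) (y (r h))
        (fun cc V => {n ∈ Set.range d | V ∩ u' n cc = ∅}.Finite) base
    · intro V hV
      have : {n ∈ Set.range d | V ∩ u' n h = ∅} = ∅ := by
        ext n
        simp only [Set.mem_setOf_eq, Set.mem_empty_iff_false, iff_false, not_and]
        intro _
        have hhn : h ∉ I n := fun hc => hh (hecov hc)
        have : u' n h = Set.univ := by simp [hu'def, hhn]
        rw [this, Set.inter_univ]
        exact Set.Nonempty.ne_empty ⟨x h, mem_of_mem_nhds hV⟩
      rw [this]; exact Set.finite_empty
  -- verify the neighborhood condition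
  intro U hU
  rw [nhds_pi, Filter.mem_pi] at hU
  obtain ⟨G, hGfin, V, hV, hGV⟩ := hU
  have hbig : {n ∈ Set.range d | U ∩ O n = ∅} ⊆
      ⋃ h ∈ G, {n ∈ Set.range d | V h ∩ u' n h = ∅} := by
    rintro n ⟨hn1, hn2⟩
    by_contra hnot
    have hnot' : ∀ h ∈ G, (V h ∩ u' n h).Nonempty := by
      intro h hhG
      rcases Set.eq_empty_or_nonempty (V h ∩ u' n h) with hemp | hne2
      · have hmem : n ∈ {n ∈ Set.range d | V h ∩ u' n h = ∅} := ⟨hn1, hemp⟩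
        exact absurd (Set.mem_iUnion₂.mpr ⟨h, hhG, hmem⟩) hnot
      · exact hne2
    have hsel : ∀ h : H, ∃ z ∈ u' n h, h ∈ G → z ∈ V h := by
      intro h
      by_cases hhG : h ∈ G
      · obtain ⟨z, hz1, hz2⟩ := hnot' h hhG
        exact ⟨z, hz2, fun _ => hz1⟩
      · obtain ⟨z, hz⟩ := hu'ne n h
        exact ⟨z, hz, fun hc => absurd hc hhG⟩
    choose z hz1 hz2 using hsel
    have hzU : z ∈ U := hGV fun h hhG => hz2 h hhG
    have hzO : z ∈ O n := hu'O n fun h _ => hz1 h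
    have : z ∈ U ∩ O n := ⟨hzU, hzO⟩
    simp [hn2] at this
  exact ((hGfin.biUnion fun h _ => main h (V h) (hV h)).subset hbig)
end

section
/- A countable product ∏_{i∈ℕ} X_i of sequentially pseudocompact topological spaces is sequentially pseudocompact. -/
theorem seqPseudocompact_countable_pi (X : ℕ → Type*) [∀ i, TopologicalSpace (X i)]
    (hX : ∀ i, SeqPseudocompact (X i)) : SeqPseudocompact (∀ i, X i) := by
  classical
  intro O hO hne
  -- shrink each O n to a basic open box
  have hbox : ∀ n, ∃ W : ∀ i, Set (X i), (∀ i, IsOpen (W i)) ∧ (∀ i, (W i).Nonempty) ∧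
      Set.pi Set.univ W ⊆ O n := by
    intro n
    obtain ⟨p, hp⟩ := hne n
    obtain ⟨I, u, hu, hsub⟩ := isOpen_pi_iff.mp (hO n) p hp
    refine ⟨fun i => if h : i ∈ I then u i else Set.univ, ?_, ?_, ?_⟩
    · intro i
      by_cases h : i ∈ I <;> simp only [h, dif_pos, dif_neg, not_false_iff]
      · exact (hu i h).1
      · exact isOpen_univ
    · intro i
      by_cases h : i ∈ I <;> simp only [h, dif_pos, dif_neg, not_false_iff]
      · exact ⟨p i, (hu i h).2⟩
      · exact ⟨p i, Set.mem_univ _⟩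
    · intro y hy
      apply hsub
      intro i hi
      have hiI : i ∈ I := hi
      have := hy i (Set.mem_univ i)
      simpa only [dif_pos hiI] using this
  choose W hWopen hWne hWsub using hbox
  -- key step: refine an infinite set along one coordinate
  have key : ∀ (i : ℕ) (J' : Set ℕ), J'.Infinite →
      ∃ J, J ⊆ J' ∧ J.Infinite ∧ ∃ x : X i,
        ∀ U ∈ nhds x, {n ∈ J | U ∩ W n i = ∅}.Finite := by
    intro i J' hJ'
    set e := Nat.nth (· ∈ J') with he_def
    have he : StrictMono e := Nat.nth_strictMono hJ'
    have hemem : ∀ m, e m ∈ J' := fun m => Nat.nth_mem_of_infinite hJ' m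
    obtain ⟨K, hK, x, hx⟩ := hX i (fun m => W (e m) i) (fun m => hWopen _ i) (fun m => hWne _ i)
    refine ⟨e '' K, ?_, hK.image he.injective.injOn, x, ?_⟩
    · rintro _ ⟨m, _, rfl⟩; exact hemem m
    · intro U hU
      apply ((hx U hU).image e).subset
      rintro n ⟨⟨m, hm, rfl⟩, h2⟩
      exact ⟨m, ⟨hm, h2⟩, rfl⟩
  choose! f hfsub hfinf g hg using key
  -- iterate
  set Js : ℕ → Set ℕ := fun i => Nat.rec Set.univ (fun k J => f k J) i with hJs_def
  have hJsS : ∀ i, Js (i + 1) = f i (Js i) := fun i => rfl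
  have hInf : ∀ i, (Js i).Infinite := by
    intro i
    induction i with
    | zero => exact Set.infinite_univ
    | succ k ih => rw [hJsS]; exact hfinf k (Js k) ih
  have hsubJ : ∀ i, Js (i + 1) ⊆ Js i := by
    intro i; rw [hJsS]; exact hfsub i (Js i) (hInf i)
  have hanti : Antitone Js := antitone_nat_of_succ_le hsubJ
  set x : ∀ i, X i := fun i => g i (Js i) (hInf i) with hx_def
  have hx : ∀ i, ∀ U ∈ nhds (x i), {n ∈ Js (i + 1) | U ∩ W n i = ∅}.Finite := by
    intro i U hU
    have := hg i (Js i) (hInf i) U hU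
    rw [hJsS]
    exact this
  -- diagonal sequence
  have hstep : ∀ (k a : ℕ), ∃ b, b ∈ Js (k + 1) ∧ a < b := by
    intro k a
    obtain ⟨b, hb, hab⟩ := (hInf (k + 1)).exists_gt a
    exact ⟨b, hb, hab⟩
  choose nf hnfmem hnflt using hstep
  set seq : ℕ → ℕ := fun k => Nat.rec (nf 0 0) (fun k b => nf (k + 1) b) k with hseq_def
  have hseqmem : ∀ k, seq k ∈ Js (k + 1) := by
    intro k
    cases k with
    | zero => exact hnfmem 0 0
    | succ m => exact hnfmem (m + 1) (seq m)
  have hseqmono : StrictMono seq :=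
    strictMono_nat_of_lt_succ (fun k => hnflt (k + 1) (seq k))
  refine ⟨Set.range seq, Set.infinite_range_of_injective hseqmono.injective, x, ?_⟩
  intro U hU
  rw [nhds_pi] at hU
  obtain ⟨I, t, ht, htsub⟩ := Filter.mem_pi'.mp hU
  have hfin : (⋃ i ∈ I, ((Set.range seq \ Js (i + 1)) ∪
      {n ∈ Js (i + 1) | t i ∩ W n i = ∅})).Finite := by
    apply Set.Finite.biUnion I.finite_toSet
    intro i _
    apply Set.Finite.union
    · apply ((Set.finite_Iic i).image seq).subset
      rintro _ ⟨⟨k, rfl⟩, hk⟩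
      refine ⟨k, ?_, rfl⟩
      simp only [Set.mem_Iic]
      by_contra h
      push_neg at h
      exact hk (hanti (by omega : i + 1 ≤ k + 1) (hseqmem k))
    · exact hx i (t i) (ht i)
  apply hfin.subset
  intro n hn
  have hnJ : n ∈ Set.range seq := hn.1
  have hnO : U ∩ O n = ∅ := hn.2
  by_contra hc
  have hcn : ∀ i ∈ I, n ∈ Js (i + 1) ∧ (t i ∩ W n i).Nonempty := by
    intro i hi
    have h1 : n ∉ (Set.range seq \ Js (i + 1)) ∪ {m ∈ Js (i + 1) | t i ∩ W m i = ∅} :=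
      fun h => hc (Set.mem_biUnion hi h)
    have hnJs : n ∈ Js (i + 1) := by
      by_contra hcon
      exact h1 (Or.inl ⟨hnJ, hcon⟩)
    refine ⟨hnJs, Set.nonempty_iff_ne_empty.2 fun heq => h1 (Or.inr ⟨hnJs, heq⟩)⟩
  have hpick : ∀ i, ∃ y, y ∈ W n i ∧ (i ∈ I → y ∈ t i) := by
    intro i
    by_cases hi : i ∈ I
    · obtain ⟨y, hyt, hyW⟩ := (hcn i hi).2
      exact ⟨y, hyW, fun _ => hyt⟩
    · obtain ⟨y, hy⟩ := hWne n i
      exact ⟨y, hy, fun h => absurd h hi⟩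
  choose y hyW hyt using hpick
  have hymem : y ∈ U ∩ O n :=
    ⟨htsub (fun i hi => hyt i hi), hWsub n (fun i _ => hyW i)⟩
  rw [hnO] at hymem
  exact hymem
end

section
/- The product of a sequentially pseudocompact topological space with a feebly compact topological space is feebly compact. -/
def FeeblyCompact (X : Type*) [TopologicalSpace X] : Prop :=
  ∀ O : ℕ → Set X, (∀ n, IsOpen (O n)) → (∀ n, (O n).Nonempty) →
    ∃ x : X, ∀ U ∈ nhds x, {n : ℕ | (U ∩ O n).Nonempty}.Infinite

theorem feeblyCompact_prod {X Y : Type*} [TopologicalSpace X] [TopologicalSpace Y]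
    (hX : SeqPseudocompact X) (hY : FeeblyCompact Y) : FeeblyCompact (X × Y) := by
  intro O hopen hne
  -- pick a basic open box inside each O n
  have hbox : ∀ n, ∃ A : Set X, ∃ B : Set Y,
      IsOpen A ∧ IsOpen B ∧ A.Nonempty ∧ B.Nonempty ∧ A ×ˢ B ⊆ O n := by
    intro n
    obtain ⟨⟨a, b⟩, hab⟩ := hne n
    obtain ⟨A, B, hA, hB, haA, hbB, hsub⟩ := (isOpen_prod_iff.mp (hopen n)) a b hab
    exact ⟨A, B, hA, hB, ⟨a, haA⟩, ⟨b, hbB⟩, hsub⟩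
  choose A B hAopen hBopen hAne hBne hsub using hbox
  obtain ⟨J, hJinf, x, hx⟩ := hX A hAopen hAne
  -- enumerate J
  let e : ℕ → ℕ := fun k => ((Set.Infinite.natEmbedding J hJinf) k : ℕ)
  have heJ : ∀ k, e k ∈ J := fun k => ((Set.Infinite.natEmbedding J hJinf) k).2
  have heinj : Function.Injective e := by
    intro i j h
    exact (Set.Infinite.natEmbedding J hJinf).injective (Subtype.ext h)
  obtain ⟨y, hy⟩ := hY (fun k => B (e k)) (fun k => hBopen _) (fun k => hBne _)
  refine ⟨(x, y), ?_⟩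
  intro W hW
  rw [nhds_prod_eq, Filter.mem_prod_iff] at hW
  obtain ⟨U, hU, V, hV, hUV⟩ := hW
  have hT : {k : ℕ | (V ∩ B (e k)).Nonempty}.Infinite := hy V hV
  have hF : {n ∈ J | U ∩ A n = ∅}.Finite := hx U hU
  have hFpre : (e ⁻¹' {n ∈ J | U ∩ A n = ∅}).Finite :=
    hF.preimage (heinj.injOn)
  have hT' : ({k : ℕ | (V ∩ B (e k)).Nonempty} \ (e ⁻¹' {n ∈ J | U ∩ A n = ∅})).Infinite :=
    hT.diff hFpre
  have hmain : e '' ({k : ℕ | (V ∩ B (e k)).Nonempty} \ (e ⁻¹' {n ∈ J | U ∩ A n = ∅}))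
      ⊆ {n : ℕ | (W ∩ O n).Nonempty} := by
    rintro m ⟨k, ⟨hkV, hkF⟩, rfl⟩
    obtain ⟨b, hbV, hbB⟩ := hkV
    have hUA : (U ∩ A (e k)).Nonempty := by
      rw [Set.nonempty_iff_ne_empty]
      intro h
      exact hkF ⟨heJ k, h⟩
    obtain ⟨a, haU, haA⟩ := hUA
    exact ⟨(a, b), hUV ⟨haU, hbV⟩, hsub (e k) ⟨haA, hbB⟩⟩
  exact (hT'.image (heinj.injOn)).mono hmain
end

section
/- Let (X_h)_{h∈H} be a family of topological spaces such that all but at most one factor are sequentially pseudocompact and the remaining factor is feebly compact. Then the product ∏_{h∈H} X_h (with the product topology) is feebly compact. -/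
/-- From sequential pseudocompactness, extract a further infinite subset of any
infinite index set together with a witness point. -/
lemma seq_step {Y : Type*} [TopologicalSpace Y] (hY : SeqPseudocompact Y)
    (V : ℕ → Set Y) (hVo : ∀ n, IsOpen (V n)) (hVne : ∀ n, (V n).Nonempty)
    {J : Set ℕ} (hJ : J.Infinite) :
    ∃ J' : Set ℕ, J' ⊆ J ∧ J'.Infinite ∧
      ∃ x : Y, ∀ U ∈ nhds x, {n ∈ J' | U ∩ V n = ∅}.Finite := by
  have hJ' : (setOf (· ∈ J)).Infinite := hJ
  obtain ⟨Jm, hJm, x, hx⟩ :=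
    hY (fun m => V (Nat.nth (· ∈ J) m)) (fun m => hVo _) (fun m => hVne _)
  refine ⟨Nat.nth (· ∈ J) '' Jm, ?_, ?_, x, ?_⟩
  · rintro n ⟨m, _, rfl⟩; exact Nat.nth_mem_of_infinite hJ' m
  · exact hJm.image ((Nat.nth_injective hJ').injOn)
  · intro U hU
    have hfin := hx U hU
    have heq : {n ∈ Nat.nth (· ∈ J) '' Jm | U ∩ V n = ∅}
        = Nat.nth (· ∈ J) '' {m ∈ Jm | U ∩ V (Nat.nth (· ∈ J) m) = ∅} := by
      ext n
      constructor
      · rintro ⟨⟨m, hm, rfl⟩, hcond⟩; exact ⟨m, ⟨hm, hcond⟩, rfl⟩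
      · rintro ⟨m, ⟨hm, hcond⟩, rfl⟩; exact ⟨⟨m, hm, rfl⟩, hcond⟩
    rw [heq]
    exact hfin.image _

theorem feeblyCompact_pi_of_one_feeblyCompact {H : Type*} (X : H → Type*)
    [∀ h, TopologicalSpace (X h)] (h₀ : H) (hfc : FeeblyCompact (X h₀))
    (hsp : ∀ h, h ≠ h₀ → SeqPseudocompact (X h)) : FeeblyCompact (∀ h, X h) := by
  classical
  intro O hO hOne
  -- choose points and basic boxes inside each O n
  choose p hp using hOne
  haveI : ∀ h, Nonempty (X h) := fun h => ⟨p 0 h⟩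
  have hbox : ∀ n, ∃ (F : Finset H) (u : ∀ h, Set (X h)),
      (∀ h ∈ F, IsOpen (u h) ∧ p n h ∈ u h) ∧ Set.pi (↑F) u ⊆ O n := fun n =>
    (isOpen_pi_iff.mp (hO n)) (p n) (hp n)
  choose F u hFu hFsub using hbox
  set V : ℕ → ∀ h, Set (X h) := fun n h => if h ∈ F n then u n h else Set.univ with hV
  have hVo : ∀ n h, IsOpen (V n h) := by
    intro n h
    by_cases hh : h ∈ F n
    · simp only [hV, if_pos hh]; exact (hFu n h hh).1
    · simp only [hV, if_neg hh]; exact isOpen_univ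
  have hVmem : ∀ n h, p n h ∈ V n h := by
    intro n h
    by_cases hh : h ∈ F n
    · simp only [hV, if_pos hh]; exact (hFu n h hh).2
    · simp only [hV, if_neg hh]; trivial
  have hVne : ∀ n h, (V n h).Nonempty := fun n h => ⟨p n h, hVmem n h⟩
  have hVsub : ∀ n, Set.pi Set.univ (V n) ⊆ O n := by
    intro n f hf
    apply hFsub n
    intro h hh
    have hh' : h ∈ F n := hh
    have := hf h (Set.mem_univ h)
    simp only [hV, if_pos hh'] at this
    exact this
  have hVuniv : ∀ n h, h ∉ (⋃ m, ((F m : Set H))) → V n h = Set.univ := by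
    intro n h hh
    have : h ∉ F n := fun hc => hh (Set.mem_iUnion.mpr ⟨n, hc⟩)
    simp only [hV, if_neg this]
  -- countable enumeration of relevant coordinates
  set T : Set H := ⋃ m, ((F m : Set H)) with hT
  have hTc : T.Countable := Set.countable_iUnion (fun m => (F m).countable_toSet)
  obtain ⟨e, he⟩ : ∃ e : ℕ → H, insert h₀ T = Set.range e :=
    (hTc.insert h₀).exists_eq_range ⟨h₀, Set.mem_insert _ _⟩
  have hcover : ∀ h ∈ T, ∃ k, e k = h := by
    intro h hh
    have : h ∈ Set.range e := he ▸ Set.mem_insert_of_mem h₀ hh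
    obtain ⟨k, hk⟩ := this
    exact ⟨k, hk⟩
  -- the refinement step
  have key : ∀ (k : ℕ) (J : Set ℕ), J.Infinite → ∃ J' : Set ℕ, J' ⊆ J ∧ J'.Infinite ∧
      (e k ≠ h₀ → ∃ x : X (e k), ∀ U ∈ nhds x, {n ∈ J' | U ∩ V n (e k) = ∅}.Finite) := by
    intro k J hJ
    by_cases hk : e k = h₀
    · exact ⟨J, subset_rfl, hJ, fun hne => absurd hk hne⟩
    · obtain ⟨J', h1, h2, hx⟩ := seq_step (hsp _ hk) (fun n => V n (e k))
        (fun n => hVo n _) (fun n => hVne n _) hJ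
      exact ⟨J', h1, h2, fun _ => hx⟩
  choose g hg1 hg2 hg3 using key
  -- iterate the refinement
  let next : ℕ → {S : Set ℕ // S.Infinite} → {S : Set ℕ // S.Infinite} :=
    fun k J => ⟨g k J.1 J.2, hg2 k J.1 J.2⟩
  let Jseq : ℕ → {S : Set ℕ // S.Infinite} :=
    fun k => Nat.rec ⟨Set.univ, Set.infinite_univ⟩ next k
  have hJstep : ∀ k, (Jseq (k + 1)).1 = g k (Jseq k).1 (Jseq k).2 := fun k => rfl
  have hsubstep : ∀ k, (Jseq (k + 1)).1 ⊆ (Jseq k).1 := by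
    intro k; rw [hJstep k]; exact hg1 k _ _
  have hmono : ∀ k m, k ≤ m → (Jseq m).1 ⊆ (Jseq k).1 := by
    intro k m hkm
    induction hkm with
    | refl => exact subset_rfl
    | @step m' hkm ih => exact (hsubstep m').trans ih
  -- the witness points at each step
  have hxk : ∀ k, ∃ x : X (e k), e k ≠ h₀ →
      ∀ U ∈ nhds x, {n ∈ (Jseq (k + 1)).1 | U ∩ V n (e k) = ∅}.Finite := by
    intro k
    by_cases hk : e k = h₀
    · exact ⟨Classical.arbitrary _, fun hne => absurd hk hne⟩
    · obtain ⟨x, hx⟩ := hg3 k (Jseq k).1 (Jseq k).2 hk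
      refine ⟨x, fun _ => ?_⟩
      rw [hJstep k]
      exact hx
  choose xk hxk using hxk
  -- diagonal sequence
  have hex : ∀ (k m : ℕ), ∃ n ∈ (Jseq k).1, m < n := fun k m => (Jseq k).2.exists_gt m
  choose f hf1 hf2 using hex
  let d : ℕ → ℕ := fun k => Nat.rec (f 1 0) (fun k ih => f (k + 2) ih) k
  have hd1 : ∀ k, d k ∈ (Jseq (k + 1)).1 := by
    intro k
    cases k with
    | zero => exact hf1 1 0
    | succ k => exact hf1 (k + 2) (d k)
  have hd2 : ∀ k, d k < d (k + 1) := fun k => hf2 (k + 2) (d k)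
  have hdmono : StrictMono d := strictMono_nat_of_lt_succ hd2
  have hdJ : ∀ k m, k ≤ m → d m ∈ (Jseq (k + 1)).1 :=
    fun k m hkm => hmono (k + 1) (m + 1) (Nat.succ_le_succ hkm) (hd1 m)
  -- apply feeble compactness along the diagonal at coordinate h₀
  obtain ⟨x₀, hx₀⟩ := hfc (fun m => V (d m) h₀) (fun m => hVo _ _) (fun m => hVne _ _)
  -- coordinate points
  have hxcoord : ∀ h : H, ∃ xh : X h, (h ≠ h₀ ∧ h ∈ T) → ∃ k : ℕ,
      ∀ U ∈ nhds xh, {n ∈ (Jseq (k + 1)).1 | U ∩ V n h = ∅}.Finite := by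
    intro h
    by_cases hc : h ≠ h₀ ∧ h ∈ T
    · obtain ⟨k, hk⟩ := hcover h hc.2
      subst hk
      exact ⟨xk k, fun _ => ⟨k, hxk k hc.1⟩⟩
    · exact ⟨Classical.arbitrary _, fun hcc => absurd hcc hc⟩
  choose xc hxc using hxcoord
  set xfull : ∀ h, X h := Function.update xc h₀ x₀ with hxfull
  refine ⟨xfull, ?_⟩
  intro U hU
  obtain ⟨t, htU, hto, hxt⟩ := mem_nhds_iff.mp hU
  obtain ⟨G, W, hGW, hsubt⟩ := isOpen_pi_iff.mp hto xfull hxt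
  -- the infinite "good at h₀" set
  set W0 : Set (X h₀) := if h₀ ∈ G then W h₀ else Set.univ with hW0
  have hW0nhds : W0 ∈ nhds x₀ := by
    by_cases hG0 : h₀ ∈ G
    · rw [hW0, if_pos hG0]
      have hx0W : xfull h₀ ∈ W h₀ := (hGW h₀ hG0).2
      rw [hxfull, Function.update_self] at hx0W
      exact (hGW h₀ hG0).1.mem_nhds hx0W
    · rw [hW0, if_neg hG0]; exact Filter.univ_mem
  have hA : {m : ℕ | (W0 ∩ V (d m) h₀).Nonempty}.Infinite := hx₀ W0 hW0nhds
  -- finitely many bad indices at each other coordinate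
  have hB : ∀ h ∈ G, h ≠ h₀ → {m : ℕ | ¬(W h ∩ V (d m) h).Nonempty}.Finite := by
    intro h hG hne
    by_cases hhT : h ∈ T
    · obtain ⟨k, hk⟩ := hxc h ⟨hne, hhT⟩
      have hxW : xfull h ∈ W h := (hGW h hG).2
      rw [hxfull, Function.update_of_ne hne] at hxW
      have hWn : W h ∈ nhds (xc h) := (hGW h hG).1.mem_nhds hxW
      have hfin := hk (W h) hWn
      have hss : {m : ℕ | ¬(W h ∩ V (d m) h).Nonempty} ⊆
          Set.Iio k ∪ d ⁻¹' {n ∈ (Jseq (k + 1)).1 | W h ∩ V n h = ∅} := by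
        intro m hm
        by_cases hmk : m < k
        · exact Or.inl hmk
        · exact Or.inr ⟨hdJ k m (le_of_not_gt hmk),
            Set.not_nonempty_iff_eq_empty.mp hm⟩
      exact ((Set.finite_Iio k).union (hfin.preimage hdmono.injective.injOn)).subset hss
    · have : {m : ℕ | ¬(W h ∩ V (d m) h).Nonempty} = ∅ := by
        ext m
        simp only [Set.mem_setOf_eq, Set.mem_empty_iff_false, iff_false, not_not]
        refine ⟨xfull h, ?_, ?_⟩
        · exact (hGW h hG).2
        · rw [hVuniv (d m) h hhT]; trivial
      rw [this]; exact Set.finite_empty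
  set Bad : Set ℕ := ⋃ h ∈ G.erase h₀, {m : ℕ | ¬(W h ∩ V (d m) h).Nonempty} with hBad
  have hBadFin : Bad.Finite :=
    Set.Finite.biUnion (G.erase h₀).finite_toSet
      (fun h hh => hB h (Finset.mem_of_mem_erase hh) (Finset.ne_of_mem_erase hh))
  have hAgood : ({m : ℕ | (W0 ∩ V (d m) h₀).Nonempty} \ Bad).Infinite := hA.diff hBadFin
  have hsubset : d '' ({m : ℕ | (W0 ∩ V (d m) h₀).Nonempty} \ Bad) ⊆
      {n : ℕ | (U ∩ O n).Nonempty} := by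
    rintro n ⟨m, hm, rfl⟩
    have hall : ∀ h : H, ((if h ∈ G then W h else Set.univ) ∩ V (d m) h).Nonempty := by
      intro h
      by_cases hG : h ∈ G
      · rw [if_pos hG]
        by_cases hne : h = h₀
        · subst hne
          have := hm.1
          rwa [hW0, if_pos hG] at this
        · by_contra hcon
          exact hm.2 (Set.mem_biUnion (Finset.mem_erase.mpr ⟨hne, hG⟩) hcon)
      · rw [if_neg hG]
        exact ⟨p (d m) h, Set.mem_univ _, hVmem (d m) h⟩
    choose q hq using hall
    refine ⟨q, ?_, ?_⟩
    · apply htU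
      apply hsubt
      intro h hG
      have hG' : h ∈ G := hG
      have := (hq h).1
      rwa [if_pos hG'] at this
    · apply hVsub (d m)
      intro h _
      exact (hq h).2
  exact (hAgood.image hdmono.injective.injOn).mono hsubset
end

section
/- Let (X_h)_{h∈H} be a family of sequentially pseudocompact topological spaces. If (O_n)_{n∈ℕ} is a sequence of nonempty sets that are open in the ω-box topology on ∏_{h∈H} X_h, then there exist an infinite set J ⊆ ℕ and a point x ∈ ∏_{h∈H} X_h such that for every neighborhood U of x in the Tychonoff product topology, the set {n ∈ J : U ∩ O_n = ∅} is finite. -/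
/-- The ω-box topology on a product: generated by boxes where all but countably
many coordinates are the whole space. -/
def omegaBoxTopology {H : Type*} (X : H → Type*) [∀ h, TopologicalSpace (X h)] :
    TopologicalSpace (∀ h, X h) :=
  TopologicalSpace.generateFrom
    { S | ∃ O : ∀ h, Set (X h), (∀ h, IsOpen (O h)) ∧
        {h | O h ≠ Set.univ}.Countable ∧ S = Set.pi Set.univ O }

open Set Topology

def IsLimitAlong {X : Type*} [TopologicalSpace X] (V : ℕ → Set X) (J : Set ℕ) (x : X) : Prop :=
  ∀ U ∈ 𝓝 x, {n ∈ J | U ∩ V n = ∅}.Finite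

section IsLimitAlong

variable {X : Type*} [TopologicalSpace X] {V W : ℕ → Set X} {J J' : Set ℕ} {x : X}

theorem IsLimitAlong.of_diff_finite (h : IsLimitAlong V J x) (hJ : (J' \ J).Finite) :
    IsLimitAlong V J' x := fun U hU =>
  ((h U hU).union hJ).subset fun n ⟨hnJ', hn⟩ => by
    by_cases hnJ : n ∈ J
    exacts [Or.inl ⟨hnJ, hn⟩, Or.inr ⟨hnJ', hnJ⟩]

theorem IsLimitAlong.mono (h : IsLimitAlong V J x) (hVW : ∀ n, V n ⊆ W n) :
    IsLimitAlong W J x := fun U hU =>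
  (h U hU).subset fun n ⟨hnJ, hn⟩ =>
    ⟨hnJ, eq_empty_of_subset_empty (hn ▸ inter_subset_inter_right U (hVW n))⟩

theorem isLimitAlong_univ : IsLimitAlong (fun _ => (univ : Set X)) J x := fun _ hU =>
  finite_empty.subset fun _ ⟨_, hn⟩ =>
    (hn ▸ ⟨mem_of_mem_nhds hU, mem_univ x⟩ : x ∈ (∅ : Set X))

end IsLimitAlong

theorem SeqPseudocompact.exists_subset_isLimitAlong {X : Type*} [TopologicalSpace X]
    (hX : SeqPseudocompact X) {V : ℕ → Set X} (hVo : ∀ n, IsOpen (V n))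
    (hVne : ∀ n, (V n).Nonempty) {J : Set ℕ} (hJ : J.Infinite) :
    ∃ J' ⊆ J, J'.Infinite ∧ ∃ x, IsLimitAlong V J' x := by
  let e : ℕ ↪ ℕ := (Set.Infinite.natEmbedding J hJ).trans (Function.Embedding.subtype _)
  obtain ⟨K, hK, x, hx⟩ := hX (V ∘ e) (fun _ => hVo _) (fun _ => hVne _)
  refine ⟨e '' K, image_subset_iff.2 fun n _ => (Set.Infinite.natEmbedding J hJ n).2,
    hK.image e.injective.injOn, x, fun U hU => ((hx U hU).image e).subset ?_⟩
  rintro _ ⟨⟨n, hn, rfl⟩, hUn⟩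
  exact ⟨n, ⟨hn, hUn⟩, rfl⟩

theorem exists_infinite_forall_of_refine_nat (Q : ℕ → Set ℕ → Prop)
    (hQ : ∀ k {J J'}, (J' \ J).Finite → Q k J → Q k J')
    (hrefine : ∀ k J, J.Infinite → ∃ J' ⊆ J, J'.Infinite ∧ Q k J') :
    ∃ J : Set ℕ, J.Infinite ∧ ∀ k, Q k J := by
  have hstep : ∀ k (J : Set ℕ), ∃ J' ⊆ J, J.Infinite → J'.Infinite ∧ Q k J' := fun k J => by
    by_cases hJ : J.Infinite
    · obtain ⟨J', hJ'J, hJ'⟩ := hrefine k J hJ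
      exact ⟨J', hJ'J, fun _ => hJ'⟩
    · exact ⟨J, subset_rfl, fun h => absurd h hJ⟩
  choose R hRsub hR using hstep
  let C : ℕ → Set ℕ := fun k => Nat.rec univ (fun k J => R k J) k
  have hCinf : ∀ k, (C k).Infinite := fun k => by
    induction k with
    | zero => exact infinite_univ
    | succ k ih => exact (hR k (C k) ih).1
  have hCanti : Antitone C := antitone_nat_of_succ_le fun k => hRsub k (C k)
  choose n hnC hn using fun k => (hCinf k).exists_gt k
  refine ⟨range n, infinite_of_not_bddAbove ?_, fun k => hQ k ?_ (hR k (C k) (hCinf k)).2⟩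
  · rintro ⟨b, hb⟩
    exact (hn b).not_ge (hb (mem_range_self b))
  · refine ((finite_Iio (k + 1)).image n).subset ?_
    rintro _ ⟨⟨j, rfl⟩, hj⟩
    exact ⟨j, lt_of_not_ge fun hjk => hj (hCanti hjk (hnC j)), rfl⟩

theorem exists_infinite_forall_of_refine {ι : Type*} [Countable ι] (Q : ι → Set ℕ → Prop)
    (hQ : ∀ i {J J'}, (J' \ J).Finite → Q i J → Q i J')
    (hrefine : ∀ i J, J.Infinite → ∃ J' ⊆ J, J'.Infinite ∧ Q i J') :
    ∃ J : Set ℕ, J.Infinite ∧ ∀ i, Q i J := by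
  cases isEmpty_or_nonempty ι
  · exact ⟨univ, infinite_univ, isEmptyElim⟩
  · obtain ⟨f, hf⟩ := exists_surjective_nat ι
    obtain ⟨J, hJ, hQJ⟩ :=
      exists_infinite_forall_of_refine_nat (Q ∘ f) (fun k => hQ (f k)) (fun k => hrefine (f k))
    exact ⟨J, hJ, hf.forall.2 hQJ⟩

theorem exists_isLimitAlong_of_countable {ι : Type*} [Countable ι] {X : ι → Type*}
    [∀ i, TopologicalSpace (X i)] (hX : ∀ i, SeqPseudocompact (X i)) {V : ℕ → ∀ i, Set (X i)}
    (hVo : ∀ n i, IsOpen (V n i)) (hVne : ∀ n i, (V n i).Nonempty) :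
    ∃ J : Set ℕ, J.Infinite ∧ ∃ x : ∀ i, X i, ∀ i, IsLimitAlong (fun n => V n i) J (x i) := by
  obtain ⟨J, hJ, hx⟩ := exists_infinite_forall_of_refine
    (fun i J => ∃ x, IsLimitAlong (fun n => V n i) J x)
    (fun i _ _ hJJ' ⟨x, hx⟩ => ⟨x, hx.of_diff_finite hJJ'⟩)
    (fun i _ hJ => (hX i).exists_subset_isLimitAlong (hVo · i) (hVne · i) hJ)
  choose x hx using hx
  exact ⟨J, hJ, x, hx⟩

theorem isLimitAlong_univ_pi {ι : Type*} {X : ι → Type*} [∀ i, TopologicalSpace (X i)]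
    {B : ℕ → ∀ i, Set (X i)} (hBne : ∀ n i, (B n i).Nonempty) {J : Set ℕ} {x : ∀ i, X i}
    (hx : ∀ i, IsLimitAlong (fun n => B n i) J (x i)) :
    IsLimitAlong (fun n => pi univ (B n)) J x := by
  classical
  intro U hU
  rw [nhds_pi, Filter.mem_pi] at hU
  obtain ⟨I, hI, t, ht, hIU⟩ := hU
  refine (hI.biUnion fun i _ => hx i (t i) (ht i)).subset fun n ⟨hnJ, hn⟩ => ?_
  by_contra hmeet
  simp only [mem_iUnion, mem_ofPred_eq, not_exists, not_and] at hmeet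
  have hbox : (I.pi t ∩ pi univ (B n)).Nonempty := by
    rw [← univ_pi_ite, ← pi_inter_distrib, univ_pi_nonempty_iff]
    intro i
    split_ifs with hi
    · exact nonempty_iff_ne_empty.2 (hmeet i hi hnJ)
    · simpa using hBne n i
  exact hbox.ne_empty (eq_empty_of_subset_empty (hn ▸ inter_subset_inter_left _ hIU))

section OmegaBox

variable {H : Type*} (X : H → Type*) [∀ h, TopologicalSpace (X h)]

def omegaBoxes : Set (Set (∀ h, X h)) :=
  { S | ∃ O : ∀ h, Set (X h), (∀ h, IsOpen (O h)) ∧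
      {h | O h ≠ univ}.Countable ∧ S = pi univ O }

theorem univ_mem_omegaBoxes : univ ∈ omegaBoxes X :=
  ⟨fun _ => univ, fun _ => isOpen_univ, by simp, pi_univ univ |>.symm⟩

theorem inter_mem_omegaBoxes {S T : Set (∀ h, X h)} (hS : S ∈ omegaBoxes X)
    (hT : T ∈ omegaBoxes X) : S ∩ T ∈ omegaBoxes X := by
  obtain ⟨A, hAo, hAc, rfl⟩ := hS
  obtain ⟨B, hBo, hBc, rfl⟩ := hT
  refine ⟨fun h => A h ∩ B h, fun h => (hAo h).inter (hBo h), (hAc.union hBc).mono ?_,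
    pi_inter_distrib.symm⟩
  intro h hh
  by_contra hAB
  simp only [mem_union, mem_ofPred_eq, not_or, not_not] at hAB
  exact hh (show A h ∩ B h = univ by rw [hAB.1, hAB.2, univ_inter])

theorem isTopologicalBasis_omegaBoxes :
    @TopologicalSpace.IsTopologicalBasis _ (omegaBoxTopology X) (omegaBoxes X) := by
  rw [← insert_eq_of_mem (univ_mem_omegaBoxes X)]
  exact TopologicalSpace.isTopologicalBasis_of_subbasis_of_inter (t := omegaBoxTopology X) rfl
    fun _ hS _ hT => inter_mem_omegaBoxes X hS hT

end OmegaBox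

theorem seqPseudocompact_omegaBox {H : Type*} (X : H → Type*) [∀ h, TopologicalSpace (X h)]
    (hX : ∀ h, SeqPseudocompact (X h)) (O : ℕ → Set (∀ h, X h))
    (hopen : ∀ n, @IsOpen _ (omegaBoxTopology X) (O n)) (hne : ∀ n, (O n).Nonempty) :
    ∃ J : Set ℕ, J.Infinite ∧ ∃ x : ∀ h, X h,
      ∀ U ∈ nhds x, {n ∈ J | U ∩ O n = ∅}.Finite := by
  classical
  have hbox : ∀ n, ∃ B : ∀ h, Set (X h), (∀ h, IsOpen (B h)) ∧ {h | B h ≠ univ}.Countable ∧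
      (∀ h, (B h).Nonempty) ∧ pi univ B ⊆ O n := fun n => by
    obtain ⟨y, hy⟩ := hne n
    obtain ⟨_, ⟨B, hBo, hBc, rfl⟩, hyB, hBO⟩ :=
      (isTopologicalBasis_omegaBoxes X).exists_subset_of_mem_open (t := omegaBoxTopology X) hy
        (hopen n)
    exact ⟨B, hBo, hBc, univ_pi_nonempty_iff.1 ⟨y, hyB⟩, hBO⟩
  choose B hBo hBc hBne hBO using hbox
  set S : Set H := ⋃ n, {h | B n h ≠ univ}
  have : Countable S := (countable_iUnion hBc).to_subtype
  obtain ⟨J, hJ, y, hy⟩ := exists_isLimitAlong_of_countable (fun h : S => hX h)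
    (fun n h => hBo n h) (fun n h => hBne n h)
  let x : ∀ h, X h := fun h => if hh : h ∈ S then y ⟨h, hh⟩ else (hBne 0 h).some
  have hx : ∀ h, IsLimitAlong (fun n => B n h) J (x h) := fun h => by
    by_cases hh : h ∈ S
    · simpa [x, hh] using hy ⟨h, hh⟩
    · have hBuniv : ∀ n, B n h = univ := fun n => not_not.1 fun hn => hh (mem_iUnion_of_mem n hn)
      simpa only [hBuniv] using isLimitAlong_univ
  exact ⟨J, hJ, x, (isLimitAlong_univ_pi hBne hx).mono hBO⟩
end

section
/- The product D^𝔠 of continuum-many copies of the two-point discrete space is sequentially pseudocompact (with the product topology). -/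
open Set Filter Topology Classical
attribute [local instance] Classical.propDecidable

theorem seqPseudocompact_cantor_power :
    SeqPseudocompact ((ℕ → Bool) → Bool) := by
  intro O hO hne
  choose p hp using hne
  have hbasic : ∀ n, ∃ F : Finset (ℕ → Bool),
      {y : (ℕ → Bool) → Bool | ∀ z ∈ F, y z = p n z} ⊆ O n := by
    intro n
    obtain ⟨I, u, hu, hsub⟩ := (isOpen_pi_iff.mp (hO n)) (p n) (hp n)
    refine ⟨I, fun y hy => hsub fun a ha => ?_⟩
    rw [hy a ha]
    exact (hu a ha).2
  choose F hF using hbasic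
  set C : Set (ℕ → Bool) := ⋃ n, (F n : Set (ℕ → Bool)) with hC
  have hCc : C.Countable := countable_iUnion fun n => (F n).countable_toSet
  haveI := hCc.to_subtype
  obtain ⟨L, φ, hφ, hlim⟩ :=
    CompactSpace.tendsto_subseq (X := C → Bool) (fun n (z : C) => p n z.val)
  set x : (ℕ → Bool) → Bool := fun z => if h : z ∈ C then L ⟨z, h⟩ else false with hx
  refine ⟨Set.range φ, Set.infinite_range_of_injective hφ.injective, x, ?_⟩
  intro U hU
  obtain ⟨V, hVU, hVopen, hxV⟩ := mem_nhds_iff.mp hU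
  obtain ⟨S, u, hu, hsub⟩ := isOpen_pi_iff.mp hVopen x hxV
  have key : ∀ᶠ m in atTop, ∀ z ∈ S, z ∈ C → p (φ m) z = x z := by
    rw [Finset.eventually_all]
    intro z hzS
    by_cases hz : z ∈ C
    · have h1 := (tendsto_pi_nhds.mp hlim) ⟨z, hz⟩
      rw [nhds_discrete, tendsto_pure] at h1
      filter_upwards [h1] with m hm _
      simpa [hx, hz] using hm
    · exact Eventually.of_forall fun m h => absurd h hz
  obtain ⟨N, hN⟩ := eventually_atTop.mp key
  apply Set.Finite.subset ((Set.finite_Iio N).image φ)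
  rintro n ⟨⟨m, rfl⟩, hbad⟩
  refine ⟨m, ?_, rfl⟩
  by_contra hm
  simp only [Set.mem_Iio, not_lt] at hm
  have hy : (U ∩ O (φ m)).Nonempty := by
    refine ⟨fun z => if z ∈ F (φ m) then p (φ m) z else x z, ?_, ?_⟩
    · apply hVU
      apply hsub
      intro a haS
      have hxa : (fun z => if z ∈ F (φ m) then p (φ m) z else x z) a = x a := by
        by_cases hFa : a ∈ F (φ m)
        · simp only [hFa, if_pos]
          exact hN m hm a haS (Set.mem_iUnion.mpr ⟨φ m, hFa⟩)
        · simp [hFa]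
      rw [hxa]
      exact (hu a haS).2
    · exact hF (φ m) fun z hz => by simp [hz]
  exact hy.ne_empty hbad
end

section
/- The product of a Tychonoff sequentially pseudocompact space with a Tychonoff pseudocompact space is pseudocompact. -/
open Set Function

/-- An infinite set of naturals contains arbitrarily large elements. -/
lemma infinite_exists_gt {s : Set ℕ} (hs : s.Infinite) (m : ℕ) : ∃ k ∈ s, m < k := by
  by_contra h
  push_neg at h
  exact hs (Set.Finite.subset (Set.finite_Iic m) h)

theorem pseudocompact_prod {X Y : Type*} [TopologicalSpace X] [TopologicalSpace Y]
    [CompletelyRegularSpace X] [T2Space X] [CompletelyRegularSpace Y] [T2Space Y]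
    (hX : SeqPseudocompact X)
    (hY : ∀ f : Y → ℝ, Continuous f → ∃ C : ℝ, ∀ y, |f y| ≤ C) :
    ∀ f : X × Y → ℝ, Continuous f → ∃ C : ℝ, ∀ p, |f p| ≤ C := by
  intro f hf
  by_contra hCon
  push_neg at hCon
  -- pick points where |f| is large
  choose p hp using fun n : ℕ => hCon n
  have hSopen : ∀ n : ℕ, IsOpen {q : X × Y | (n : ℝ) < |f q|} := fun n =>
    isOpen_lt continuous_const (continuous_abs.comp hf)
  -- pick basic open boxes around each point on which |f| > n
  have key : ∀ n : ℕ, ∃ (u : Set X) (v : Set Y), IsOpen u ∧ IsOpen v ∧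
      (p n).1 ∈ u ∧ (p n).2 ∈ v ∧ u ×ˢ v ⊆ {q : X × Y | (n : ℝ) < |f q|} := fun n =>
    (isOpen_prod_iff.mp (hSopen n)) (p n).1 (p n).2 (by simpa using hp n)
  choose O V hO hV hpO hpV hOV using key
  -- apply sequential pseudocompactness of X
  obtain ⟨J, hJinf, x0, hx0⟩ := hX O hO fun n => ⟨_, hpO n⟩
  -- the family (V n), n ∈ J, is locally finite in Y
  have hlf : LocallyFinite fun n : ↥J => V (n : ℕ) := by
    intro y
    by_contra hcon
    push_neg at hcon
    set M : ℝ := |f (x0, y)| + 1 with hM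
    have hTopen : IsOpen {q : X × Y | |f q| < M} :=
      isOpen_lt (continuous_abs.comp hf) continuous_const
    obtain ⟨U, W, hUo, hWo, hxU, hyW, hUW⟩ := isOpen_prod_iff.mp hTopen x0 y
      (by simp only [mem_setOf_eq, hM]; linarith)
    have hfinU := hx0 U (hUo.mem_nhds hxU)
    have hinfW : {n : ↥J | (V (n : ℕ) ∩ W).Nonempty}.Infinite :=
      hcon W (hWo.mem_nhds hyW)
    have himg : ((fun n : ↥J => (n : ℕ)) '' {n : ↥J | (V (n : ℕ) ∩ W).Nonempty}).Infinite :=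
      hinfW.image Subtype.val_injective.injOn
    obtain ⟨m, hm⟩ := exists_nat_gt M
    have hdiff : (((fun n : ↥J => (n : ℕ)) '' {n : ↥J | (V (n : ℕ) ∩ W).Nonempty})
        \ {n ∈ J | U ∩ O n = ∅}).Infinite := himg.diff hfinU
    obtain ⟨k, hk, hmk⟩ := infinite_exists_gt hdiff m
    obtain ⟨⟨n, hnW, rfl⟩, hk2⟩ := hk
    have hUO : (U ∩ O (n : ℕ)).Nonempty := by
      rcases eq_empty_or_nonempty (U ∩ O (n : ℕ)) with he | hne
      · exact absurd ⟨n.2, he⟩ hk2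
      · exact hne
    obtain ⟨u, huU, huO⟩ := hUO
    obtain ⟨v, hvV, hvW⟩ := hnW
    have h1 : ((n : ℕ) : ℝ) < |f (u, v)| := hOV (n : ℕ) (mk_mem_prod huO hvV)
    have h2 : |f (u, v)| < M := hUW (mk_mem_prod huU hvW)
    have h3 : (m : ℝ) < ((n : ℕ) : ℝ) := by exact_mod_cast hmk
    linarith
  -- construct bump functions on each V n
  have hbump : ∀ n : ↥J, ∃ g : Y → ℝ, Continuous g ∧ g (p (n : ℕ)).2 = 1 ∧
      (∀ y, y ∉ V (n : ℕ) → g y = 0) ∧ ∀ y, 0 ≤ g y := by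
    intro n
    obtain ⟨g, hgc, hg0, hg1⟩ := CompletelyRegularSpace.completely_regular (p (n : ℕ)).2
      (V (n : ℕ))ᶜ (hV (n : ℕ)).isClosed_compl (by simpa using hpV (n : ℕ))
    refine ⟨fun y => 1 - (g y : ℝ), continuous_const.sub (continuous_subtype_val.comp hgc),
      ?_, ?_, ?_⟩
    · have : (g (p (n : ℕ)).2 : ℝ) = 0 := by rw [hg0]; rfl
      simp [this]
    · intro y hy
      have : g y = 1 := hg1 hy
      simp [this]
    · intro y
      have := (g y).2.2
      simp only [sub_nonneg]
      exact this
  choose bump hbc hb1 hb0 hbnn using hbump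
  -- support of each term is inside V n
  have hsupp : ∀ n : ↥J, support (fun y => ((n : ℕ) : ℝ) * bump n y) ⊆ V (n : ℕ) := by
    intro n y hy
    by_contra hyV
    exact hy (by simp [hb0 n y hyV])
  have hlf2 : LocallyFinite fun n : ↥J => support fun y => ((n : ℕ) : ℝ) * bump n y :=
    hlf.subset hsupp
  -- the sum
  set g : Y → ℝ := fun y => ∑ᶠ n : ↥J, ((n : ℕ) : ℝ) * bump n y with hg
  have hgc : Continuous g :=
    continuous_finsum (fun n => continuous_const.mul (hbc n)) hlf2
  obtain ⟨C, hC⟩ := hY g hgc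
  obtain ⟨m, hm⟩ := exists_nat_gt C
  obtain ⟨k, hkJ, hmk⟩ := infinite_exists_gt hJinf m
  set nn : ↥J := ⟨k, hkJ⟩ with hnn
  have hfin : (support fun j : ↥J => ((j : ℕ) : ℝ) * bump j (p k).2).Finite := by
    have := hlf2.point_finite (p k).2
    exact this.subset fun j hj => hj
  have hle : ((k : ℕ) : ℝ) * bump nn (p k).2 ≤ g (p k).2 :=
    single_le_finsum nn hfin fun j => mul_nonneg (Nat.cast_nonneg _) (hbnn j _)
  have hval : bump nn (p k).2 = 1 := hb1 nn
  rw [hval, mul_one] at hle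
  have : g (p k).2 ≤ C := (abs_le.mp (hC _)).2
  have h4 : (m : ℝ) < (k : ℝ) := by exact_mod_cast hmk
  linarith
end

section
/- In the definition of sequential pseudocompactness via pairwise disjoint open sets, if condition (*) fails — i.e., there exist a sequence (O_n) of nonempty open sets such that for every infinite J ⊆ ℕ and every x ∈ X some open neighborhood U of x misses O_n for infinitely many n ∈ J — then one can construct a sequence (U_i)_{i∈ℕ} of pairwise disjoint nonempty open sets, a strictly chosen sequence of indices (m_i) and a decreasing sequence of infinite sets (J_i) such that U_i ⊆ O_{m_i} and U_i ∩ O_n = ∅ for all n ∈ J_i. -/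
theorem disjointification_construction {X : Type*} [TopologicalSpace X]
    (O : ℕ → Set X) (hopen : ∀ n, IsOpen (O n)) (hne : ∀ n, (O n).Nonempty)
    (star : ∀ (J : Set ℕ), J.Infinite → ∀ x : X, ∃ U : Set X, IsOpen U ∧ x ∈ U ∧
      {n ∈ J | U ∩ O n = ∅}.Infinite) :
    ∃ (U : ℕ → Set X) (m : ℕ → ℕ) (J : ℕ → Set ℕ),
      (∀ i, IsOpen (U i)) ∧ (∀ i, (U i).Nonempty) ∧
      Pairwise (Function.onFun Disjoint U) ∧
      Function.Injective m ∧
      (∀ i, (J i).Infinite) ∧ (∀ i j, i ≤ j → J j ⊆ J i) ∧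
      (∀ i, U i ⊆ O (m i)) ∧
      (∀ i, ∀ n ∈ J i, U i ∩ O n = ∅) := by
  classical
  have key : ∀ J : {J : Set ℕ // J.Infinite},
      ∃ (V : Set X) (m : ℕ) (J' : {J : Set ℕ // J.Infinite}),
        IsOpen V ∧ V.Nonempty ∧ m ∈ J.1 ∧ V ⊆ O m ∧ J'.1 ⊆ J.1 \ {m} ∧
        ∀ n ∈ J'.1, V ∩ O n = ∅ := by
    rintro ⟨J, hJ⟩
    obtain ⟨m, hm⟩ := hJ.nonempty
    obtain ⟨x, hx⟩ := hne m
    obtain ⟨W, hWopen, hxW, hWinf⟩ := star J hJ x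
    refine ⟨W ∩ O m, m, ⟨{n ∈ J | W ∩ O n = ∅} \ {m},
      hWinf.diff (Set.finite_singleton m)⟩, hWopen.inter (hopen m),
      ⟨x, hxW, hx⟩, hm, Set.inter_subset_right, ?_, ?_⟩
    · intro n hn
      exact ⟨hn.1.1, hn.2⟩
    · intro n hn
      have h0 : W ∩ O n = ∅ := hn.1.2
      rw [← Set.subset_empty_iff, ← h0]
      exact Set.inter_subset_inter_left _ Set.inter_subset_left
  choose V mf Jf hVopen hVne hmem hVsub hJsub hVdisj using key
  let T : ℕ → {J : Set ℕ // J.Infinite} := fun i =>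
    Nat.rec ⟨Set.univ, Set.infinite_univ⟩ (fun _ J => Jf J) i
  have hT : ∀ i, T (i + 1) = Jf (T i) := fun i => rfl
  have step : ∀ i, (T (i + 1)).1 ⊆ (T i).1 \ {mf (T i)} := fun i => hJsub (T i)
  have anti : Antitone (fun i => (T i).1) :=
    antitone_nat_of_succ_le fun i => (step i).trans Set.diff_subset
  have hdisj : ∀ i j, i < j → Disjoint (V (T i)) (V (T j)) := by
    intro i j hij
    have h1 : mf (T j) ∈ (T (i + 1)).1 := anti hij (hmem (T j))
    have h2 : V (T i) ∩ O (mf (T j)) = ∅ := hVdisj (T i) _ h1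
    rw [Set.disjoint_iff_inter_eq_empty, ← Set.subset_empty_iff, ← h2]
    exact Set.inter_subset_inter_right _ (hVsub (T j))
  refine ⟨fun i => V (T i), fun i => mf (T i), fun i => (T (i + 1)).1,
    fun i => hVopen _, fun i => hVne _, ?_, ?_, fun i => (T (i + 1)).2,
    fun i j hij => anti (Nat.add_le_add_right hij 1), fun i => hVsub _,
    fun i => hVdisj _⟩
  · intro i j hij
    rcases hij.lt_or_gt with h | h
    · exact hdisj i j h
    · exact (hdisj j i h).symm
  · intro i j hij
    by_contra hne'
    rcases Ne.lt_or_gt hne' with h | h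
    · have h1 : mf (T j) ∈ (T (i + 1)).1 := anti h (hmem (T j))
      simp only [] at hij
      exact (step i h1).2 (by rw [← hij]; rfl)
    · have h1 : mf (T i) ∈ (T (j + 1)).1 := anti h (hmem (T i))
      simp only [] at hij
      exact (step j h1).2 (by rw [hij]; rfl)
end

section
/- If α = ω, then a topological space is sequentially ω-pseudocompact if and only if it is d-sequentially ω-pseudocompact (i.e., the variant requiring pairwise disjoint open sets), and both are equivalent to sequential pseudocompactness. -/
def SeqOmegaPseudocompact (X : Type*) [TopologicalSpace X] : Prop :=
  ∀ O : ℕ → Set X, (∀ n, IsOpen (O n)) → (∀ n, (O n).Nonempty) →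
    ∃ x : X, ∃ Z : Set ℕ, Z.Infinite ∧
      ∀ U ∈ nhds x, ∃ β : ℕ, ∀ γ ∈ Z, β < γ → (U ∩ O γ).Nonempty

def DSeqOmegaPseudocompact (X : Type*) [TopologicalSpace X] : Prop :=
  ∀ O : ℕ → Set X, (∀ n, IsOpen (O n)) → (∀ n, (O n).Nonempty) →
    Pairwise (Function.onFun Disjoint O) →
    ∃ x : X, ∃ Z : Set ℕ, Z.Infinite ∧
      ∀ U ∈ nhds x, ∃ β : ℕ, ∀ γ ∈ Z, β < γ → (U ∩ O γ).Nonempty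

open Set Topology

/-- Invariant of a state `(T, c)`: `T` is infinite and on `T`, `c n` is a nonempty open
subset of `O n`. -/
private def GoodSt {X : Type*} [TopologicalSpace X] (O : ℕ → Set X)
    (p : Set ℕ × (ℕ → Set X)) : Prop :=
  p.1.Infinite ∧ ∀ n ∈ p.1, IsOpen (p.2 n) ∧ (p.2 n).Nonempty ∧ p.2 n ⊆ O n

/-- Relation between consecutive states: a new antichain element `a ⊆ O m` has been chosen. -/
private def RelSt {X : Type*} [TopologicalSpace X] (O : ℕ → Set X)
    (p : Set ℕ × (ℕ → Set X)) (m : ℕ) (a : Set X)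
    (q : Set ℕ × (ℕ → Set X)) : Prop :=
  m ∈ p.1 ∧ IsOpen a ∧ a.Nonempty ∧ a ⊆ O m ∧ (∃ n0 ∈ p.1, a ⊆ p.2 n0) ∧
  q.1 ⊆ p.1 ∧ (∀ n ∈ q.1, m < n) ∧ ∀ n ∈ q.1, q.2 n ⊆ p.2 n ∧ Disjoint (q.2 n) a

private lemma step_lemma {X : Type*} [TopologicalSpace X] (O : ℕ → Set X)
    (hgoal : ¬ ∃ x : X, ∃ Z : Set ℕ, Z.Infinite ∧
      ∀ U ∈ nhds x, ∃ β : ℕ, ∀ γ ∈ Z, β < γ → (U ∩ O γ).Nonempty)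
    (p : Set ℕ × (ℕ → Set X)) (hp : GoodSt O p) :
    ∃ m a q, GoodSt O q ∧ RelSt O p m a q := by
  obtain ⟨hT, hc⟩ := hp
  obtain ⟨k0, hk0⟩ := hT.nonempty
  obtain ⟨huo, hune, huO⟩ := hc k0 hk0
  by_cases hS : {m ∈ p.1 | p.2 k0 ⊆ closure (p.2 m)}.Infinite
  · -- direct witness for the goal: contradiction
    exfalso; apply hgoal
    obtain ⟨x, hx⟩ := hune
    refine ⟨x, _, hS, ?_⟩
    intro U hU
    obtain ⟨V, hVU, hVo, hxV⟩ := mem_nhds_iff.mp hU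
    refine ⟨0, fun γ hγ _ => ?_⟩
    obtain ⟨hγT, hγcl⟩ := hγ
    have hwne : (V ∩ p.2 k0).Nonempty := ⟨x, hxV, hx⟩
    have hwo : IsOpen (V ∩ p.2 k0) := hVo.inter huo
    rcases (V ∩ p.2 k0 ∩ p.2 γ).eq_empty_or_nonempty with he | hne
    · exfalso
      have hdis : Disjoint (V ∩ p.2 k0) (p.2 γ) := Set.disjoint_iff_inter_eq_empty.mpr he
      have hdc := hdis.closure_right hwo
      obtain ⟨y, hy⟩ := hwne
      exact (Set.disjoint_left.mp hdc hy) (hγcl hy.2)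
    · obtain ⟨y, hy⟩ := hne
      exact ⟨y, hVU hy.1.1, (hc γ hγT).2.2 hy.2⟩
  · have hSf : {m ∈ p.1 | p.2 k0 ⊆ closure (p.2 m)}.Finite := Set.not_infinite.mp hS
    obtain ⟨m', hm'⟩ := (hT.diff hSf).nonempty
    have hm'T : m' ∈ p.1 := hm'.1
    have hm'n : ¬ p.2 k0 ⊆ closure (p.2 m') := fun h => hm'.2 ⟨hm'T, h⟩
    set d : Set X := p.2 k0 \ closure (p.2 m') with hd
    have hdo : IsOpen d := huo.sdiff isClosed_closure
    have hdne : d.Nonempty := by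
      obtain ⟨z, hz1, hz2⟩ := Set.not_subset.mp hm'n
      exact ⟨z, hz1, hz2⟩
    by_cases hF : {n ∈ p.1 | (p.2 n \ closure d).Nonempty}.Infinite
    · -- subcase 1: shrink the state by removing closure d, new element d ⊆ O k0
      refine ⟨k0, d, ⟨{n ∈ p.1 | (p.2 n \ closure d).Nonempty ∧ k0 < n},
        fun n => p.2 n \ closure d⟩, ?_, ?_⟩
      · constructor
        · apply Set.Infinite.mono (s := {n ∈ p.1 | (p.2 n \ closure d).Nonempty} \ Set.Iic k0)
          · rintro n ⟨⟨hn1, hn2⟩, hn3⟩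
            exact ⟨hn1, hn2, lt_of_not_ge (fun h => hn3 h)⟩
          · exact hF.diff (Set.finite_Iic k0)
        · rintro n ⟨hn1, hn2, _⟩
          exact ⟨(hc n hn1).1.sdiff isClosed_closure, hn2,
            Set.diff_subset.trans (hc n hn1).2.2⟩
      · refine ⟨hk0, hdo, hdne, Set.diff_subset.trans huO, ⟨k0, hk0, Set.diff_subset⟩,
          ?_, ?_, ?_⟩
        · rintro n ⟨hn1, _, _⟩; exact hn1
        · rintro n ⟨_, _, hn3⟩; exact hn3
        · rintro n ⟨hn1, _, _⟩
          refine ⟨Set.diff_subset, Set.disjoint_left.mpr ?_⟩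
          rintro z ⟨_, hz2⟩ hzd
          exact hz2 (subset_closure hzd)
    · -- subcase 2: for cofinitely many n, p.2 n ⊆ closure d, which is disjoint from p.2 m'
      have hFf : {n ∈ p.1 | (p.2 n \ closure d).Nonempty}.Finite := Set.not_infinite.mp hF
      have hdd : Disjoint d (p.2 m') := by
        refine Set.disjoint_left.mpr ?_
        rintro z ⟨_, hz2⟩ hzm
        exact hz2 (subset_closure hzm)
      have hcld : Disjoint (closure d) (p.2 m') := hdd.closure_left (hc m' hm'T).1
      refine ⟨m', p.2 m', ⟨{n ∈ p.1 | m' < n ∧ p.2 n ⊆ closure d}, p.2⟩, ?_, ?_⟩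
      · constructor
        · apply Set.Infinite.mono
            (s := (p.1 \ {n ∈ p.1 | (p.2 n \ closure d).Nonempty}) \ Set.Iic m')
          · rintro n ⟨⟨hn1, hn2⟩, hn3⟩
            refine ⟨hn1, lt_of_not_ge (fun h => hn3 h), ?_⟩
            have : p.2 n \ closure d = ∅ := by
              by_contra h
              exact hn2 ⟨hn1, Set.nonempty_iff_ne_empty.mpr h⟩
            exact Set.diff_eq_empty.mp this
          · exact (hT.diff hFf).diff (Set.finite_Iic m')
        · rintro n ⟨hn1, _, _⟩; exact hc n hn1
      · obtain ⟨hmo, hmne, hmO⟩ := hc m' hm'T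
        refine ⟨hm'T, hmo, hmne, hmO, ⟨m', hm'T, subset_rfl⟩, ?_, ?_, ?_⟩
        · rintro n ⟨hn1, _, _⟩; exact hn1
        · rintro n ⟨_, hn2, _⟩; exact hn2
        · rintro n ⟨_, _, hn3⟩
          exact ⟨subset_rfl, (hcld.mono_left hn3).symm.symm⟩

private lemma dseq_imp_seq {X : Type*} [TopologicalSpace X]
    (hD : DSeqOmegaPseudocompact X) : SeqOmegaPseudocompact X := by
  intro O hOo hOne
  by_contra hgoal
  have h0 : GoodSt O (Set.univ, O) :=
    ⟨Set.infinite_univ, fun n _ => ⟨hOo n, hOne n, subset_rfl⟩⟩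
  have hstep := step_lemma O hgoal
  choose m a q hGood hRel using hstep
  let P := {p : Set ℕ × (ℕ → Set X) // GoodSt O p}
  let f : P → P := fun s => ⟨q s.1 s.2, hGood s.1 s.2⟩
  let seq : ℕ → P := fun k => f^[k] ⟨(Set.univ, O), h0⟩
  have hseq : ∀ k, seq (k + 1) = f (seq k) := fun k =>
    Function.iterate_succ_apply' f k _
  let M : ℕ → ℕ := fun k => m (seq k).1 (seq k).2
  let A : ℕ → Set X := fun k => a (seq k).1 (seq k).2
  have hR : ∀ k, RelSt O (seq k).1 (M k) (A k) (seq (k + 1)).1 := by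
    intro k
    have := hRel (seq k).1 (seq k).2
    rw [hseq k]
    exact this
  -- monotonicity of states
  have mono : ∀ i k, i ≤ k → (seq k).1.1 ⊆ (seq i).1.1 ∧
      ∀ n ∈ (seq k).1.1, (seq k).1.2 n ⊆ (seq i).1.2 n := by
    intro i k hik
    induction k, hik using Nat.le_induction with
    | base => exact ⟨subset_rfl, fun n _ => subset_rfl⟩
    | succ k hik ih =>
      obtain ⟨_, _, _, _, _, hsub, _, hsh⟩ := hR k
      constructor
      · exact hsub.trans ih.1
      · intro n hn
        exact (hsh n hn).1.trans (ih.2 n (hsub hn))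
  have hMmono : StrictMono M := by
    apply strictMono_nat_of_lt_succ
    intro k
    have h1 := (hR (k + 1)).1
    exact (hR k).2.2.2.2.2.2.1 _ h1
  have hAop : ∀ k, IsOpen (A k) := fun k => (hR k).2.1
  have hAne : ∀ k, (A k).Nonempty := fun k => (hR k).2.2.1
  have hAO : ∀ k, A k ⊆ O (M k) := fun k => (hR k).2.2.2.1
  have hdisj : ∀ j k, j < k → Disjoint (A k) (A j) := by
    intro j k hjk
    obtain ⟨n0, hn0, han0⟩ := (hR k).2.2.2.2.1
    have hjk1 : j + 1 ≤ k := hjk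
    have hmono := mono (j + 1) k hjk1
    have hn0' : n0 ∈ (seq (j + 1)).1.1 := hmono.1 hn0
    have hsub : A k ⊆ (seq (j + 1)).1.2 n0 := han0.trans (hmono.2 n0 hn0)
    have hd := ((hR j).2.2.2.2.2.2.2 n0 hn0').2
    exact hd.mono_left hsub
  have hpair : Pairwise (Function.onFun Disjoint A) := by
    intro i j hij
    rcases hij.lt_or_gt with h | h
    · exact (hdisj i j h).symm
    · exact hdisj j i h
  obtain ⟨x, Z, hZinf, hZ⟩ := hD A hAop hAne hpair
  apply hgoal
  refine ⟨x, M '' Z, hZinf.image (hMmono.injective.injOn), ?_⟩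
  intro U hU
  obtain ⟨β, hβ⟩ := hZ U hU
  refine ⟨M β, ?_⟩
  rintro γ' ⟨γ, hγZ, rfl⟩ hlt
  have hβγ : β < γ := hMmono.lt_iff_lt.mp hlt
  obtain ⟨y, hy1, hy2⟩ := hβ γ hγZ hβγ
  exact ⟨y, hy1, hAO γ hy2⟩

theorem seqOmegaPseudocompact_equivalences (X : Type*) [TopologicalSpace X] :
    (SeqOmegaPseudocompact X ↔ DSeqOmegaPseudocompact X) ∧
    (SeqOmegaPseudocompact X ↔ SeqPseudocompact X) := by
  constructor
  · constructor
    · intro h O h1 h2 _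
      exact h O h1 h2
    · exact dseq_imp_seq
  · constructor
    · intro h O h1 h2
      obtain ⟨x, Z, hZ, hx⟩ := h O h1 h2
      refine ⟨Z, hZ, x, fun U hU => ?_⟩
      obtain ⟨β, hβ⟩ := hx U hU
      apply Set.Finite.subset (Set.finite_Iic β)
      rintro n ⟨hnZ, hne⟩
      by_contra hn
      have hβn : β < n := lt_of_not_ge (fun h' => hn h')
      obtain ⟨y, hy⟩ := hβ n hnZ hβn
      rw [hne] at hy
      exact hy
    · intro h O h1 h2
      obtain ⟨J, hJ, x, hx⟩ := h O h1 h2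
      refine ⟨x, J, hJ, fun U hU => ?_⟩
      obtain ⟨β, hβ⟩ := (hx U hU).bddAbove
      refine ⟨β, fun γ hγ hlt => ?_⟩
      rcases (U ∩ O γ).eq_empty_or_nonempty with he | hne
      · exact absurd (hβ ⟨hγ, he⟩) (not_le.mpr hlt)
      · exact hne
end
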